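/- arXiv:1305.3856 — 3 statements merged into one kernel-verified Lean document; each statement's English description precedes it below -/
import Mathlib

section
/- Let (A,R) be an associative Rota–Baxter algebra of weight θ, i.e. R(x)R(y) = R(R(x)y + xR(y)) + θR(xy) for all x,y. Then the binary operation a ◁ b := aR(b) − R(b)a + θab defines a right pre-Lie product on A, i.e. (a◁b)◁c − a◁(b◁c) = (a◁c)◁b − a◁(c◁b) for all a,b,c ∈ A. -/
/-- In a Rota–Baxter algebra `(A,R)` of weight `θ`, the operation
`a ◁ b := a * R b - R b * a + θ • (a * b)` is right pre-Lie. -/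
theorem rotaBaxter_right_preLie
    (k : Type*) [Field k] [CharZero k] (A : Type*) [Ring A] [Algebra k A]
    (R : A →ₗ[k] A) (θ : k)
    (hRB : ∀ x y : A, R x * R y = R (R x * y + x * R y) + θ • R (x * y)) :
    ∀ a b c : A,
      ((a * R b - R b * a + θ • (a * b)) * R c
          - R c * (a * R b - R b * a + θ • (a * b))
          + θ • ((a * R b - R b * a + θ • (a * b)) * c))
        - (a * R (b * R c - R c * b + θ • (b * c))
          - R (b * R c - R c * b + θ • (b * c)) * a
          + θ • (a * (b * R c - R c * b + θ • (b * c))))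
      = ((a * R c - R c * a + θ • (a * c)) * R b
          - R b * (a * R c - R c * a + θ • (a * c))
          + θ • ((a * R c - R c * a + θ • (a * c)) * b))
        - (a * R (c * R b - R b * c + θ • (c * b))
          - R (c * R b - R b * c + θ • (c * b)) * a
          + θ • (a * (c * R b - R b * c + θ • (c * b)))) := by
  intro a b c
  have hbc := hRB b c
  have hcb := hRB c b
  simp only [map_sub, map_add, map_smul] at *
  rw [← sub_eq_zero] at hbc hcb ⊢
  rw [← sub_eq_zero] at hbc hcb
  linear_combination (norm := noncomm_ring [smul_add, smul_sub, smul_neg, smul_smul, mul_smul_comm, smul_mul_assoc]) a * hbc - hbc * a - a * hcb + hcb * a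
end

section
/- Let (A,R) be an associative Rota–Baxter algebra of weight θ. Then the binary operation a ▷ b := R(a)b − bR(a) − θba defines a left pre-Lie product on A, i.e. (a▷b)▷c − a▷(b▷c) = (b▷a)▷c − b▷(a▷c) for all a,b,c ∈ A. -/
/-- In a Rota–Baxter algebra `(A,R)` of weight `θ`, the operation
`a ▷ b := R a * b - b * R a - θ • (b * a)` is left pre-Lie. -/
theorem rotaBaxter_left_preLie
    (k : Type*) [Field k] [CharZero k] (A : Type*) [Ring A] [Algebra k A]
    (R : A →ₗ[k] A) (θ : k)
    (hRB : ∀ x y : A, R x * R y = R (R x * y + x * R y) + θ • R (x * y)) :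
    ∀ a b c : A,
      (R (R a * b - b * R a - θ • (b * a)) * c
          - c * R (R a * b - b * R a - θ • (b * a))
          - θ • (c * (R a * b - b * R a - θ • (b * a))))
        - (R a * (R b * c - c * R b - θ • (c * b))
          - (R b * c - c * R b - θ • (c * b)) * R a
          - θ • ((R b * c - c * R b - θ • (c * b)) * a))
      = (R (R b * a - a * R b - θ • (a * b)) * c
          - c * R (R b * a - a * R b - θ • (a * b))
          - θ • (c * (R b * a - a * R b - θ • (a * b))))
        - (R b * (R a * c - c * R a - θ • (c * a))
          - (R a * c - c * R a - θ • (c * a)) * R b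
          - θ • ((R a * c - c * R a - θ • (c * a)) * b)) := by
  intro a b c
  have h1 := hRB a b
  have h2 := hRB b a
  rw [map_add] at h1 h2
  have e1 : R (R a * b - b * R a - θ • (b * a))
      = R a * R b - θ • R (a * b) - R (a * R b) - R (b * R a) - θ • R (b * a) := by
    rw [map_sub, map_sub, map_smul]
    have hx : R (R a * b) = R a * R b - θ • R (a * b) - R (a * R b) := by
      rw [h1]; abel
    rw [hx]
  have e2 : R (R b * a - a * R b - θ • (a * b))
      = R b * R a - θ • R (b * a) - R (b * R a) - R (a * R b) - θ • R (a * b) := by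
    rw [map_sub, map_sub, map_smul]
    have hx : R (R b * a) = R b * R a - θ • R (b * a) - R (b * R a) := by
      rw [h2]; abel
    rw [hx]
  rw [e1, e2]
  simp only [mul_add, add_mul, mul_sub, sub_mul, smul_sub, smul_smul,
    mul_smul_comm, smul_mul_assoc, mul_assoc]
  abel
end

section
/- Let (A,R) be a Rota–Baxter algebra of weight θ. Define x↑y := xR(y) + θxy and x↓y := R(x)y. Then (A,↑,↓) is a dendriform algebra: (a↑b)↑c = a↑(b↑c + b↓c), a↓(b↑c) = (a↓b)↑c, and a↓(b↓c) = (a↑b + a↓b)↓c for all a,b,c ∈ A. -/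
/-- A Rota–Baxter algebra of weight `θ` is dendriform for
`x↑y := x * R y + θ • (x*y)` and `x↓y := R x * y`. -/
theorem rotaBaxter_dendriform
    (k : Type*) [Field k] [CharZero k] (A : Type*) [Ring A] [Algebra k A]
    (R : A →ₗ[k] A) (θ : k)
    (hRB : ∀ x y : A, R x * R y = R (R x * y + x * R y) + θ • R (x * y)) :
    let up : A → A → A := fun x y => x * R y + θ • (x * y)
    let dn : A → A → A := fun x y => R x * y
    (∀ a b c : A, up (up a b) c = up a (up b c + dn b c)) ∧
    (∀ a b c : A, dn a (up b c) = up (dn a b) c) ∧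
    (∀ a b c : A, dn a (dn b c) = dn (up a b + dn a b) c) := by
  refine ⟨fun a b c => ?_, fun a b c => ?_, fun a b c => ?_⟩
  · have h := hRB b c
    simp only [map_add, map_smul, mul_add, add_mul, mul_assoc, h,
      mul_smul_comm, smul_mul_assoc, smul_add]
    abel
  · simp only [mul_add, mul_smul_comm, mul_assoc]
  · have h := hRB a b
    simp only []
    rw [← mul_assoc, h]
    simp only [map_add, map_smul, add_mul, smul_mul_assoc]
    abel
end
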